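/- arXiv:2301.00583 — 2 statements merged into one kernel-verified Lean document; each statement's English description precedes it below -/
import Mathlib

section
/- Let a > 0 and f(γ) = ln(1+γ) − a·√(γ/(1+γ)) for γ ≥ 0. Then f(0) = 0 and there exists a unique γ⁰ > 0 with f(γ⁰) = 0; in particular f has exactly two roots on [0,∞). -/
/-!
The substitution `t = √(γ / (1 + γ))`, i.e. `1 + γ = 1 / (1 - t²)`, maps `(0, ∞)` bijectively onto
`(0, 1)` and turns `f` into `reparam a t = -log (1 - t²) - a t`. This function is strictly convex
on `(-1, 1)` and vanishes at `0`, so it has at most one zero in `(0, 1)`. It has one by the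
intermediate value theorem: it is negative near `0` (its slope there is `-a < 0`) and tends to `+∞`
as `t → 1`.
-/

open Set Real

lemma StrictConvexOn.eq_of_apply_eq_of_lt {s : Set ℝ} {g : ℝ → ℝ} (hg : StrictConvexOn ℝ s g)
    {x y z : ℝ} (hx : x ∈ s) (hy : y ∈ s) (hz : z ∈ s) (hxy : x < y) (hxz : x < z)
    (hgy : g y = g x) (hgz : g z = g x) : y = z := by
  wlog hyz : y < z generalizing y z
  · rcases (not_lt.1 hyz).eq_or_lt with h | h
    · exact h.symm
    · exact (this hz hy hxz hxy hgz hgy h).symm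
  have := hg.lt_on_openSegment hx hz hxz.ne (by rw [openSegment_eq_Ioo hxz]; exact ⟨hxy, hyz⟩)
  simp [hgy, hgz] at this

noncomputable def reparam (a t : ℝ) : ℝ := -log (1 - t ^ 2) - a * t

lemma reparam_zero (a : ℝ) : reparam a 0 = 0 := by simp [reparam]

lemma hasDerivAt_reparam (a : ℝ) {t : ℝ} (ht : 1 - t ^ 2 ≠ 0) :
    HasDerivAt (reparam a) (2 * t / (1 - t ^ 2) - a) t := by
  have h : HasDerivAt (fun s ↦ 1 - s ^ 2) (-(2 * t)) t := by
    simpa using (hasDerivAt_pow 2 t).const_sub 1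
  exact ((h.log ht).neg.sub ((hasDerivAt_id' t).const_mul a)).congr_deriv (by ring)

lemma continuousOn_reparam (a : ℝ) : ContinuousOn (reparam a) (Ioo (-1) 1) := fun t ht ↦
  (hasDerivAt_reparam a (by nlinarith [ht.1, ht.2])).continuousAt.continuousWithinAt

lemma strictConvexOn_reparam (a : ℝ) : StrictConvexOn ℝ (Ioo (-1) 1) (reparam a) := by
  have hsq {t : ℝ} (ht : t ∈ Ioo (-1 : ℝ) 1) : 0 < 1 - t ^ 2 := by nlinarith [ht.1, ht.2]
  refine StrictMonoOn.strictConvexOn_of_deriv (convex_Ioo _ _) (continuousOn_reparam a) ?_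
  rw [interior_Ioo]
  intro x hx y hy hxy
  rw [(hasDerivAt_reparam a (hsq hx).ne').deriv, (hasDerivAt_reparam a (hsq hy).ne').deriv,
    sub_lt_sub_iff_right, div_lt_div_iff₀ (hsq hx) (hsq hy)]
  -- `2y(1 - x²) - 2x(1 - y²) = 2 (y - x)(1 + x y)`
  nlinarith [mul_pos (sub_pos.2 hxy) (by nlinarith [hx.1, hx.2, hy.1, hy.2] : 0 < 1 + x * y)]

lemma eq_of_reparam_eq_zero {a s t : ℝ} (hs : s ∈ Ioo 0 1) (ht : t ∈ Ioo 0 1)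
    (hgs : reparam a s = 0) (hgt : reparam a t = 0) : s = t := by
  have hsub : Ioo (0 : ℝ) 1 ⊆ Ioo (-1) 1 := Ioo_subset_Ioo_left (by norm_num)
  refine (strictConvexOn_reparam a).eq_of_apply_eq_of_lt (by norm_num) (hsub hs) (hsub ht)
    hs.1 ht.1 ?_ ?_ <;> rwa [reparam_zero]

lemma exists_reparam_neg {a : ℝ} (ha : 0 < a) : ∃ t ∈ Ioo 0 1, reparam a t < 0 := by
  set t := min (1 / 2) (a / 4)
  have ht : 0 < t := lt_min (by norm_num) (by positivity)
  have ht2 : t ≤ 1 / 2 := min_le_left _ _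
  have hta : t ≤ a / 4 := min_le_right _ _
  have hu : 3 / 4 ≤ 1 - t ^ 2 := by nlinarith
  -- `-log u ≤ u⁻¹ - 1 ≤ 2 t ^ 2` for `u = 1 - t ^ 2 ≥ 3 / 4`
  have hlog := one_sub_inv_le_log_of_pos (by linarith : 0 < 1 - t ^ 2)
  have hinv : (1 - t ^ 2)⁻¹ ≤ 1 + 2 * t ^ 2 := by
    rw [inv_le_iff_one_le_mul₀ (by linarith)]
    nlinarith
  refine ⟨t, ⟨ht, by linarith⟩, ?_⟩
  rw [reparam]
  nlinarith

lemma exists_reparam_pos (a : ℝ) : ∃ t ∈ Ioo 0 1, 0 < reparam a t := by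
  set ε := exp (-(|a| + 1))
  have hε : ε < 1 := exp_lt_one_iff.2 (by linarith [abs_nonneg a])
  set t := √(1 - ε)
  have ht0 : 0 < t := sqrt_pos.2 (by linarith)
  have ht1 : t < 1 := (sqrt_lt' one_pos).2 (by linarith [exp_pos (-(|a| + 1))])
  refine ⟨t, ⟨ht0, ht1⟩, ?_⟩
  have hat : a * t ≤ |a| := by
    nlinarith [le_abs_self a, neg_abs_le a, abs_nonneg a]
  rw [reparam, sq_sqrt (by linarith), sub_sub_cancel, log_exp]
  linarith

lemma exists_reparam_eq_zero {a : ℝ} (ha : 0 < a) : ∃ t ∈ Ioo 0 1, reparam a t = 0 := by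
  obtain ⟨s, hs, hgs⟩ := exists_reparam_neg ha
  obtain ⟨t, ht, hgt⟩ := exists_reparam_pos a
  have hst : uIcc s t ⊆ Ioo 0 1 := ordConnected_Ioo.uIcc_subset hs ht
  obtain ⟨r, hr, hgr⟩ := intermediate_value_uIcc
    ((continuousOn_reparam a).mono (hst.trans (Ioo_subset_Ioo_left (by norm_num))))
    (mem_uIcc.2 (Or.inl ⟨hgs.le, hgt.le⟩))
  exact ⟨r, hst hr, hgr⟩

lemma log_one_add_sub_mul_sqrt_div {γ : ℝ} (a : ℝ) (hγ : 0 ≤ γ) :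
    log (1 + γ) - a * √(γ / (1 + γ)) = reparam a √(γ / (1 + γ)) := by
  have h1 : 0 < 1 + γ := by linarith
  rw [reparam, sq_sqrt (by positivity), show 1 - γ / (1 + γ) = (1 + γ)⁻¹ by field_simp; ring,
    log_inv, neg_neg]

lemma bijOn_sqrt_div_one_add : BijOn (fun γ : ℝ ↦ √(γ / (1 + γ))) (Ioi 0) (Ioo 0 1) := by
  refine ⟨fun γ (hγ : 0 < γ) ↦ ⟨by positivity, ?_⟩, fun x (hx : 0 < x) y (hy : 0 < y) hxy ↦ ?_,
    fun t ht ↦ ⟨t ^ 2 / (1 - t ^ 2), ?_, ?_⟩⟩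
  · rw [sqrt_lt' one_pos, one_pow, div_lt_one (by linarith)]; linarith
  · rw [sqrt_inj (by positivity) (by positivity), div_eq_div_iff (by linarith) (by linarith)] at hxy
    linarith
  · have : 0 < 1 - t ^ 2 := by nlinarith [ht.1, ht.2]
    exact div_pos (pow_pos ht.1 2) this
  · have : 0 < 1 - t ^ 2 := by nlinarith [ht.1, ht.2]
    dsimp only
    rw [show t ^ 2 / (1 - t ^ 2) / (1 + t ^ 2 / (1 - t ^ 2)) = t ^ 2 by field_simp; ring,
      sqrt_sq ht.1.le]

theorem stmt_4 (a : ℝ) (ha : 0 < a)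
    (f : ℝ → ℝ) (hf : ∀ γ, f γ = Real.log (1 + γ) - a * Real.sqrt (γ / (1 + γ))) :
    f 0 = 0 ∧ ∃! γ0 : ℝ, 0 < γ0 ∧ f γ0 = 0 := by
  have hφ := bijOn_sqrt_div_one_add
  have hfg (γ : ℝ) (hγ : 0 < γ) : f γ = reparam a √(γ / (1 + γ)) :=
    (hf γ).trans (log_one_add_sub_mul_sqrt_div a hγ.le)
  refine ⟨by simp [hf], ?_⟩
  obtain ⟨t, ht, hgt⟩ := exists_reparam_eq_zero ha
  obtain ⟨γ0, hγ0 : 0 < γ0, rfl⟩ := hφ.surjOn ht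
  refine ⟨γ0, ⟨hγ0, (hfg γ0 hγ0).trans hgt⟩, fun γ ⟨hγ, hfγ⟩ ↦ hφ.injOn hγ hγ0 ?_⟩
  exact eq_of_reparam_eq_zero (hφ.mapsTo hγ) ht ((hfg γ hγ).symm.trans hfγ) hgt
end

section
/- For all complex numbers x, x̄ and positive reals y, ȳ, ln(1 + |x|²/y) ≥ ln(1 + |x̄|²/ȳ) − |x̄|²/ȳ + 2·Re(conj(x̄)·x)/ȳ − (|x̄|²/ȳ)·(|x|² + y)/(|x̄|² + ȳ), with equality when x = x̄ and y = ȳ. -/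
/-!
Write `s = ‖x‖² + y` and `s̄ = ‖x̄‖² + ȳ`. Concavity of `log` gives
`log (s/y) ≥ log (s̄/ȳ) + 1 - (s̄/ȳ)/(s/y)`, and the last two terms equal
`-‖x̄‖²/ȳ + (s̄/ȳ) · ‖x‖²/s`. The perspective `‖x‖²/s` is jointly convex, and bounding it by its
tangent plane at `(x̄, s̄)` (which is `‖s̄ x - s x̄‖² ≥ 0`) turns this into the stated minorant.
Everything works in any real inner product space; `ℂ` is the case `⟪x̄, x⟫ = Re (conj x̄ * x)`.
-/

open Real RealInnerProductSpace

section
variable {E : Type*} [NormedAddCommGroup E] [InnerProductSpace ℝ E]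

theorem two_inner_div_sub_le_norm_sq_div (c x : E) {s t : ℝ} (hs : 0 < s) (ht : 0 < t) :
    2 * ⟪c, x⟫ / t - ‖c‖ ^ 2 * s / t ^ 2 ≤ ‖x‖ ^ 2 / s := by
  have hsq := norm_sub_sq_real (t • x) (s • c)
  rw [norm_smul, norm_smul, real_inner_smul_left, real_inner_smul_right, real_inner_comm,
    Real.norm_of_nonneg ht.le, Real.norm_of_nonneg hs.le] at hsq
  have hnonneg : 0 ≤ ‖t • x - s • c‖ ^ 2 / (s * t ^ 2) := by positivity
  rw [hsq] at hnonneg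
  have hexpand : ‖x‖ ^ 2 / s - (2 * ⟪c, x⟫ / t - ‖c‖ ^ 2 * s / t ^ 2)
      = ((t * ‖x‖) ^ 2 - 2 * (t * (s * ⟪c, x⟫)) + (s * ‖c‖) ^ 2) / (s * t ^ 2) := by
    field_simp
    ring
  linarith

theorem log_add_one_sub_div_le_log {a b : ℝ} (ha : 0 < a) (hb : 0 < b) :
    log b + (1 - b / a) ≤ log a := by
  have h := log_le_sub_one_of_pos (div_pos hb ha)
  rw [log_div hb.ne' ha.ne'] at h
  linarith

noncomputable def rateMinorant (xb : E) (yb : ℝ) (x : E) (y : ℝ) : ℝ :=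
  log (1 + ‖xb‖ ^ 2 / yb) - ‖xb‖ ^ 2 / yb + 2 * ⟪xb, x⟫ / yb
    - (‖xb‖ ^ 2 / yb) * ((‖x‖ ^ 2 + y) / (‖xb‖ ^ 2 + yb))

theorem rateMinorant_le_log (xb x : E) {yb y : ℝ} (hyb : 0 < yb) (hy : 0 < y) :
    rateMinorant xb yb x y ≤ log (1 + ‖x‖ ^ 2 / y) := by
  set s := ‖x‖ ^ 2 + y
  set sb := ‖xb‖ ^ 2 + yb
  have hs : 0 < s := by positivity
  have hsb : 0 < sb := by positivity
  have hlog := log_add_one_sub_div_le_log (a := 1 + ‖x‖ ^ 2 / y) (b := 1 + ‖xb‖ ^ 2 / yb)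
    (by positivity) (by positivity)
  have htangent := mul_le_mul_of_nonneg_left (two_inner_div_sub_le_norm_sq_div xb x hs hsb)
    (div_pos hsb hyb).le
  have hratio : 1 - (1 + ‖xb‖ ^ 2 / yb) / (1 + ‖x‖ ^ 2 / y)
      = -(‖xb‖ ^ 2 / yb) + sb / yb * (‖x‖ ^ 2 / s) := by
    field_simp
    ring
  have hscale : sb / yb * (2 * ⟪xb, x⟫ / sb - ‖xb‖ ^ 2 * s / sb ^ 2)
      = 2 * ⟪xb, x⟫ / yb - ‖xb‖ ^ 2 / yb * (s / sb) := by
    field_simp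
  rw [rateMinorant]
  linarith

theorem rateMinorant_self (x : E) {y : ℝ} (hy : 0 < y) :
    rateMinorant x y x y = log (1 + ‖x‖ ^ 2 / y) := by
  have hs : ‖x‖ ^ 2 + y ≠ 0 := by positivity
  rw [rateMinorant, real_inner_self_eq_norm_sq, div_self hs]
  ring
end

theorem stmt_11 (x xb : ℂ) (y yb : ℝ) (hy : 0 < y) (hyb : 0 < yb) :
    Real.log (1 + ‖x‖ ^ 2 / y) ≥
      Real.log (1 + ‖xb‖ ^ 2 / yb) - ‖xb‖ ^ 2 / yb
        + 2 * (starRingEnd ℂ xb * x).re / yb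
        - (‖xb‖ ^ 2 / yb) * ((‖x‖ ^ 2 + y) / (‖xb‖ ^ 2 + yb)) ∧
    (x = xb → y = yb →
      Real.log (1 + ‖x‖ ^ 2 / y) =
        Real.log (1 + ‖xb‖ ^ 2 / yb) - ‖xb‖ ^ 2 / yb
          + 2 * (starRingEnd ℂ xb * x).re / yb
          - (‖xb‖ ^ 2 / yb) * ((‖x‖ ^ 2 + y) / (‖xb‖ ^ 2 + yb))) := by
  have hinner : (starRingEnd ℂ xb * x).re = ⟪xb, x⟫ := by rw [Complex.inner, mul_comm]
  rw [hinner]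
  refine ⟨rateMinorant_le_log xb x hyb hy, ?_⟩
  rintro rfl rfl
  exact (rateMinorant_self x hy).symm
end
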